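/- arXiv:2509.11272 — 6 statements merged into one kernel-verified Lean document; each statement's English description precedes it below -/
import Mathlib

section
/- For any matrices A ∈ ℝ^{m×n} and B ∈ ℝ^{n×m}, there exist orthogonal matrices U ∈ ℝ^{n×n} and V ∈ ℝ^{m×m} such that Vᵀ A U and Uᵀ B V are both upper Hessenberg matrices. -/
open Matrix

private lemma hh_core (m t : ℕ) (x : Fin m → ℝ) :
    ∃ Q : Matrix (Fin m) (Fin m) ℝ,
      Qᵀ * Q = 1 ∧ Qᵀ = Q ∧
      (∀ i j : Fin m, (i : ℕ) ≤ t → Q i j = (1 : Matrix (Fin m) (Fin m) ℝ) i j) ∧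
      (∀ i : Fin m, t + 1 < (i : ℕ) → (Q *ᵥ x) i = 0) := by
  by_cases ht : t + 1 < m
  · -- main case
    set e : Fin m := ⟨t + 1, ht⟩ with he
    set y : Fin m → ℝ := fun i => if (i : ℕ) ≤ t then 0 else x i with hy
    set c : ℝ := Real.sqrt (y ⬝ᵥ y) with hc
    set w : Fin m → ℝ := fun i => y i - c * (if i = e then 1 else 0) with hw
    have hynn : 0 ≤ y ⬝ᵥ y := Finset.sum_nonneg fun i _ => mul_self_nonneg _
    have hc2 : c * c = y ⬝ᵥ y := Real.mul_self_sqrt hynn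
    have hwle : ∀ i : Fin m, (i : ℕ) ≤ t → w i = 0 := by
      intro i hi
      have hne : i ≠ e := by intro h; rw [h] at hi; simp [he] at hi
      simp [hw, hy, hi, hne]
    have hwgt : ∀ i : Fin m, t + 1 < (i : ℕ) → w i = x i := by
      intro i hi
      have h1 : ¬ (i : ℕ) ≤ t := by omega
      have hne : i ≠ e := by intro h; rw [h] at hi; simp [he] at hi
      simp [hw, hy, h1, hne]
    have hye : y e = x e := by simp [hy, he]
    by_cases hw0 : w = 0
    · refine ⟨1, by simp, by simp, fun i j _ => rfl, fun i hi => ?_⟩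
      have h1 : ¬ (i : ℕ) ≤ t := by omega
      have h2 : i ≠ e := by intro h; rw [h] at hi; simp [he] at hi
      have := congr_fun hw0 i
      simp [hw, hy, h1, h2] at this
      simp [one_mulVec, this]
    · -- Householder reflection
      set s : ℝ := w ⬝ᵥ w with hs
      have hs0 : s ≠ 0 := by
        rw [hs, Ne, dotProduct_self_eq_zero]; exact hw0
      set a : ℝ := 2 / s with ha
      set W : Matrix (Fin m) (Fin m) ℝ := vecMulVec w w with hW
      set Q : Matrix (Fin m) (Fin m) ℝ := 1 - a • W with hQ
      have hWsymm : Wᵀ = W := by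
        ext i j; simp [hW, vecMulVec_apply, transpose_apply, mul_comm]
      have hQsymm : Qᵀ = Q := by
        rw [hQ, transpose_sub, transpose_smul, transpose_one, hWsymm]
      have hWW : W * W = s • W := by
        ext i j
        simp only [Matrix.mul_apply, hW, vecMulVec_apply, Matrix.smul_apply, hs,
          dotProduct, smul_eq_mul, Finset.sum_mul]
        exact Finset.sum_congr rfl fun k _ => by ring
      have haas : a * a * s = a + a := by
        rw [ha]; field_simp; ring
      have hQQ : Q * Q = 1 := by
        rw [hQ, sub_mul, mul_sub, mul_sub, one_mul, mul_one]
        simp only [Matrix.mul_smul, smul_mul_assoc, one_mul, hWW, smul_smul]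
        rw [show a * (a * s) = a + a from by rw [← mul_assoc]; exact haas, add_smul]
        abel
      -- mulVec computation
      have hWx : W *ᵥ x = (w ⬝ᵥ x) • w := by
        ext i
        simp only [mulVec, dotProduct, hW, vecMulVec_apply, Pi.smul_apply, smul_eq_mul,
          Finset.sum_mul]
        exact Finset.sum_congr rfl fun k _ => by ring
      -- key scalar identity : 2 * (w ⬝ᵥ x) = s
      have hsum1 : (∑ i : Fin m, (if i = e then (1:ℝ) else 0) * y i) = y e := by
        simp [ite_mul]
      have hsum2 : (∑ i : Fin m, (if i = e then (1:ℝ) else 0) * (if i = e then 1 else 0))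
          = 1 := by simp [ite_mul]
      have hwx : w ⬝ᵥ x + w ⬝ᵥ x = s := by
        have h1 : w ⬝ᵥ x = y ⬝ᵥ y - c * y e := by
          have hpt : ∀ i : Fin m, w i * x i
              = y i * y i - c * ((if i = e then 1 else 0) * y i) := by
            intro i
            by_cases hi : (i : ℕ) ≤ t
            · have hne : i ≠ e := by intro h; rw [h] at hi; simp [he] at hi
              simp [hwle i hi, hy, hi, hne]
            · have hxy : y i = x i := by simp [hy, hi]
              by_cases hieq : i = e
              · subst hieq; simp only [hw, if_pos rfl, mul_one, hxy]; ring
              · simp [hw, hy, hi, hieq]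
          rw [dotProduct]
          simp only [hpt, Finset.sum_sub_distrib, ← Finset.mul_sum, hsum1]
          rfl
        have h2 : s = y ⬝ᵥ y - (2 * c) * y e + c * c := by
          have hpt : ∀ i : Fin m, w i * w i
              = y i * y i - (2 * c) * ((if i = e then 1 else 0) * y i)
                + (c * c) * ((if i = e then 1 else 0) * (if i = e then 1 else 0)) := by
            intro i
            by_cases hieq : i = e
            · subst hieq; simp only [hw, if_pos rfl]; ring
            · simp only [hw, if_neg hieq]; ring
          rw [hs, dotProduct]
          simp only [hpt, Finset.sum_add_distrib, Finset.sum_sub_distrib, ← Finset.mul_sum,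
            hsum1, hsum2, mul_one]
          rfl
        rw [h1, h2, hc2]; ring
      have hp0 : w ⬝ᵥ x ≠ 0 := fun h => hs0 (by rw [← hwx, h, add_zero])
      have hQx : Q *ᵥ x = x - w := by
        have hax : a * (w ⬝ᵥ x) = 1 := by
          rw [ha, ← hwx, div_mul_eq_mul_div, show (2:ℝ) * (w ⬝ᵥ x) = w ⬝ᵥ x + w ⬝ᵥ x from by ring]; exact div_self (by rw [hwx]; exact hs0)
        rw [hQ, sub_mulVec, one_mulVec, smul_mulVec, hWx, smul_smul, hax, one_smul]
      refine ⟨Q, by rw [hQsymm, hQQ], hQsymm, fun i j hi => ?_, fun i hi => ?_⟩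
      · simp [hQ, Matrix.sub_apply, Matrix.smul_apply, hW, vecMulVec_apply, hwle i hi]
      · rw [hQx]
        have h1 : ¬ (i : ℕ) ≤ t := by omega
        simp [hwgt i hi, hy]
  · exact ⟨1, by simp, by simp, fun i j _ => rfl, fun i hi => absurd i.isLt (by omega)⟩

private lemma hh_side {m n : ℕ} (M : Matrix (Fin m) (Fin n) ℝ) (k : ℕ)
    (P : Matrix (Fin m) (Fin m) ℝ) (R : Matrix (Fin n) (Fin n) ℝ)
    (hPs : Pᵀ = P)
    (hPid : ∀ i j : Fin m, (i : ℕ) ≤ k → P i j = (1 : Matrix (Fin m) (Fin m) ℝ) i j)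
    (hPz : ∀ i : Fin m, k + 1 < (i : ℕ) →
      (P *ᵥ fun r => if h : k < n then M r ⟨k, h⟩ else 0) i = 0)
    (hRs : Rᵀ = R)
    (hRid : ∀ i j : Fin n, (i : ℕ) ≤ k → R i j = (1 : Matrix (Fin n) (Fin n) ℝ) i j)
    (hM : ∀ (i : Fin m) (j : Fin n), (j : ℕ) < k → (j : ℕ) + 1 < (i : ℕ) → M i j = 0) :
    ∀ (i : Fin m) (j : Fin n), (j : ℕ) < k + 1 → (j : ℕ) + 1 < (i : ℕ) →
      (Pᵀ * M * R) i j = 0 := by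
  have hPsym : ∀ a b : Fin m, P a b = P b a := by
    intro a b
    have h := congr_fun (congr_fun hPs b) a
    rw [transpose_apply] at h
    exact h
  intro i j hj hij
  have hjk : (j : ℕ) ≤ k := Nat.lt_succ_iff.mp hj
  have hRcol : ∀ s : Fin n, R s j = if s = j then (1 : ℝ) else 0 := by
    intro s
    have h := congr_fun (congr_fun hRs s) j
    rw [transpose_apply] at h
    rw [← h, hRid j s hjk, Matrix.one_apply]
    simp [eq_comm]
  rw [Matrix.mul_apply]
  simp only [hRcol, mul_ite, mul_one, mul_zero]
  rw [Finset.sum_ite_eq' Finset.univ j fun s => (Pᵀ * M) i s]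
  simp only [Finset.mem_univ, if_true]
  rw [Matrix.mul_apply]
  by_cases hjlt : (j : ℕ) < k
  · apply Finset.sum_eq_zero
    intro r _
    rw [transpose_apply]
    by_cases hr : (r : ℕ) ≤ k
    · rw [hPid r i hr, Matrix.one_apply]
      by_cases hri : r = i
      · subst hri
        rw [hM r j hjlt hij, mul_zero]
      · simp [hri]
    · rw [hM r j hjlt (by omega), mul_zero]
  · have hjk' : (j : ℕ) = k := by omega
    have hkn : k < n := hjk' ▸ j.isLt
    have hx : (fun r => if h : k < n then M r ⟨k, h⟩ else 0) = fun r => M r j := by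
      funext r
      rw [dif_pos hkn]
      congr 1
      exact Fin.ext hjk'.symm
    have hz := hPz i (by omega)
    rw [hx] at hz
    rw [← hz, mulVec, dotProduct]
    exact Finset.sum_congr rfl fun r _ => by rw [transpose_apply, hPsym r i]

private lemma hh_step (m n : ℕ) (A : Matrix (Fin m) (Fin n) ℝ)
    (B : Matrix (Fin n) (Fin m) ℝ) (k : ℕ) :
    ∃ (U : Matrix (Fin n) (Fin n) ℝ) (V : Matrix (Fin m) (Fin m) ℝ),
      Uᵀ * U = 1 ∧ Vᵀ * V = 1 ∧
      (∀ (i : Fin m) (j : Fin n), (j : ℕ) < k → (j : ℕ) + 1 < (i : ℕ) →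
        (Vᵀ * A * U) i j = 0) ∧
      (∀ (i : Fin n) (j : Fin m), (j : ℕ) < k → (j : ℕ) + 1 < (i : ℕ) →
        (Uᵀ * B * V) i j = 0) := by
  induction k with
  | zero =>
      exact ⟨1, 1, by simp, by simp,
        fun i j hj _ => absurd hj (by omega),
        fun i j hj _ => absurd hj (by omega)⟩
  | succ k ih =>
      obtain ⟨U, V, hU, hV, hA, hB⟩ := ih
      set A' : Matrix (Fin m) (Fin n) ℝ := Vᵀ * A * U with hA'
      set B' : Matrix (Fin n) (Fin m) ℝ := Uᵀ * B * V with hB'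
      obtain ⟨P, hPO, hPs, hPid, hPz⟩ :=
        hh_core m k (fun i => if h : k < n then A' i ⟨k, h⟩ else 0)
      obtain ⟨R, hRO, hRs, hRid, hRz⟩ :=
        hh_core n k (fun i => if h : k < m then B' i ⟨k, h⟩ else 0)
      refine ⟨U * R, V * P, ?_, ?_, ?_, ?_⟩
      · rw [transpose_mul, Matrix.mul_assoc, ← Matrix.mul_assoc Uᵀ, hU, Matrix.one_mul, hRO]
      · rw [transpose_mul, Matrix.mul_assoc, ← Matrix.mul_assoc Vᵀ, hV, Matrix.one_mul, hPO]
      · have hrw : (V * P)ᵀ * A * (U * R) = Pᵀ * A' * R := by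
          rw [hA', transpose_mul]
          simp only [Matrix.mul_assoc]
        rw [hrw]
        exact hh_side A' k P R hPs hPid hPz hRs hRid hA
      · have hrw : (U * R)ᵀ * B * (V * P) = Rᵀ * B' * P := by
          rw [hB', transpose_mul]
          simp only [Matrix.mul_assoc]
        rw [hrw]
        exact hh_side B' k R P hRs hRid hRz hPs hPid hB

/-- A (possibly rectangular) matrix is upper Hessenberg if its entries vanish
below the first subdiagonal. -/
def IsUpperHessenberg {m n : ℕ} (H : Matrix (Fin m) (Fin n) ℝ) : Prop :=
  ∀ (i : Fin m) (j : Fin n), (j : ℕ) + 1 < (i : ℕ) → H i j = 0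

/-- **Orthogonal Hessenberg reduction.** For any `A ∈ ℝ^{m×n}` and `B ∈ ℝ^{n×m}`
there exist orthogonal `U ∈ ℝ^{n×n}` and `V ∈ ℝ^{m×m}` such that `Vᵀ A U` and
`Uᵀ B V` are both upper Hessenberg. -/
theorem orthogonal_hessenberg_reduction (m n : ℕ)
    (A : Matrix (Fin m) (Fin n) ℝ) (B : Matrix (Fin n) (Fin m) ℝ) :
    ∃ (U : Matrix (Fin n) (Fin n) ℝ) (V : Matrix (Fin m) (Fin m) ℝ),
      Uᵀ * U = 1 ∧ Vᵀ * V = 1 ∧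
      IsUpperHessenberg (Vᵀ * A * U) ∧ IsUpperHessenberg (Uᵀ * B * V) := by
  obtain ⟨U, V, hU, hV, hA, hB⟩ := hh_step m n A B (m + n)
  exact ⟨U, V, hU, hV,
    fun i j hij => hA i j (by have := j.isLt; omega) hij,
    fun i j hij => hB i j (by have := j.isLt; omega) hij⟩
end

section
/- Let D_k ∈ ℝ^{m×k} be unit lower trapezoidal with columns d_1, ..., d_k, where the first j−1 entries of d_j are zero and the j-th entry of d_j is 1. Define D_k⁻ := ([I_k 0] D_k)⁻¹ [I_k 0]. Then I − D_k D_k⁻ = ∏_{j=k}^{1} (I − d_j e_jᵀ), where the product is taken in the order (I − d_k e_kᵀ)(I − d_{k−1} e_{k−1}ᵀ) ⋯ (I − d_1 e_1ᵀ). -/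
open Matrix

/-- The matrix `[I_k 0] ∈ ℝ^{k×m}` extracting the first `k` rows. -/
def extr (k m : ℕ) : Matrix (Fin k) (Fin m) ℝ :=
  fun i j => if (i : ℕ) = (j : ℕ) then 1 else 0

private lemma sum_ite_right {N : ℕ} (g : Fin N → ℝ) (t : ℕ) :
    (∑ a : Fin N, g a * (if (a : ℕ) = t then 1 else 0)) =
      if h : t < N then g ⟨t, h⟩ else 0 := by
  split_ifs with h
  · rw [Finset.sum_eq_single ⟨t, h⟩]
    · simp
    · intro b _ hb
      have hb' : (b : ℕ) ≠ t := fun hh => hb (Fin.ext hh)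
      simp [hb']
    · simp
  · refine Finset.sum_eq_zero fun a _ => ?_
    have ha := a.2
    have : (a : ℕ) ≠ t := by omega
    simp [this]

private lemma sum_ite_left {N : ℕ} (g : Fin N → ℝ) (t : ℕ) :
    (∑ a : Fin N, (if (a : ℕ) = t then 1 else 0) * g a) =
      if h : t < N then g ⟨t, h⟩ else 0 := by
  rw [← sum_ite_right g t]
  exact Finset.sum_congr rfl fun a _ => mul_comm _ _

private lemma prod_fix {n : Type*} [Fintype n] [DecidableEq n] (R : Matrix n n ℝ) :
    ∀ l : List (Matrix n n ℝ), (∀ x ∈ l, x * R = R) → l.prod * R = R := by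
  intro l
  induction l with
  | nil => simp
  | cons x t ih =>
    intro h
    rw [List.prod_cons, Matrix.mul_assoc, ih (fun y hy => h y (List.mem_cons_of_mem _ hy)),
      h x List.mem_cons_self]

/-- For a unit lower trapezoidal `D_k ∈ ℝ^{m×k}` with columns `d_1, …, d_k` and
`D_k⁻ = ([I_k 0] D_k)⁻¹ [I_k 0]`, one has
`I − D_k D_k⁻ = (I − d_k e_kᵀ) (I − d_{k−1} e_{k−1}ᵀ) ⋯ (I − d_1 e_1ᵀ)`. -/
theorem one_sub_DDminus_eq_prod (m k : ℕ) (hk : k ≤ m)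
    (D : Matrix (Fin m) (Fin k) ℝ)
    (hdiag : ∀ (i : Fin m) (j : Fin k), (i : ℕ) = (j : ℕ) → D i j = 1)
    (hupper : ∀ (i : Fin m) (j : Fin k), (i : ℕ) < (j : ℕ) → D i j = 0) :
    (1 : Matrix (Fin m) (Fin m) ℝ) - D * ((extr k m * D)⁻¹ * extr k m) =
      (List.ofFn fun j : Fin k =>
        (1 : Matrix (Fin m) (Fin m) ℝ) -
          vecMulVec (fun i => D i j)
            (fun a : Fin m => if (a : ℕ) = (j : ℕ) then 1 else 0)).reverse.prod := by
  set E : Matrix (Fin k) (Fin m) ℝ := extr k m with hE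
  set f : Fin k → Matrix (Fin m) (Fin m) ℝ := fun j : Fin k =>
    (1 : Matrix (Fin m) (Fin m) ℝ) -
      vecMulVec (fun i => D i j)
        (fun a : Fin m => if (a : ℕ) = (j : ℕ) then 1 else 0) with hf
  set R : Matrix (Fin m) (Fin m) ℝ :=
    Matrix.of (fun i j : Fin m => if (i : ℕ) = (j : ℕ) ∧ k ≤ (j : ℕ) then 1 else 0) with hRdef
  -- entries of A = E * D
  have hAentry : ∀ (i j : Fin k), (E * D) i j = D ⟨(i : ℕ), lt_of_lt_of_le i.2 hk⟩ j := by
    intro i j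
    rw [Matrix.mul_apply]
    have : ∀ a : Fin m, E i a * D a j = (if (a : ℕ) = (i : ℕ) then 1 else 0) * D a j := by
      intro a
      simp only [hE, extr, eq_comm]
    simp_rw [this]
    rw [sum_ite_left (fun a => D a j) (i : ℕ)]
    simp [lt_of_lt_of_le i.2 hk]
  -- A is invertible
  have hAdet : IsUnit (E * D).det := by
    have htri : (E * D).BlockTriangular OrderDual.toDual := by
      intro i j hij
      rw [hAentry]
      exact hupper _ _ hij
    rw [Matrix.det_of_lowerTriangular _ htri]
    have : ∀ i : Fin k, (E * D) i i = 1 := by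
      intro i; rw [hAentry]; exact hdiag _ _ rfl
    simp [this]
  have hAinv : (E * D)⁻¹ * (E * D) = 1 := Matrix.nonsing_inv_mul _ hAdet
  -- E * R = 0
  have hER : E * R = 0 := by
    ext i j
    rw [Matrix.mul_apply, Matrix.zero_apply]
    refine Finset.sum_eq_zero fun a _ => ?_
    by_cases h1 : (i : ℕ) = (a : ℕ)
    · have hR0 : R a j = 0 := by
        simp only [hRdef, Matrix.of_apply]
        rw [if_neg]
        rintro ⟨h2, h3⟩
        have := i.2
        omega
      rw [hR0, mul_zero]
    · have hE0 : E i a = 0 := by simp [hE, extr, h1]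
      rw [hE0, zero_mul]
  -- key truncation lemma
  have key : ∀ n, n ≤ k → ((List.ofFn f).take n).reverse.prod * D =
      Matrix.of (fun (i : Fin m) (j : Fin k) => if n ≤ (j : ℕ) then D i j else 0) := by
    intro n
    induction n with
    | zero =>
      intro _
      ext i j
      simp
    | succ n ih =>
      intro hn
      have hnk : n < k := hn
      have hnm : n < m := lt_of_lt_of_le hnk hk
      rw [List.take_succ]
      have hget : (List.ofFn f)[n]? = some (f ⟨n, hnk⟩) := by
        simp [List.getElem?_ofFn, List.ofFnNthVal, hnk]
      rw [hget]
      simp only [Option.toList_some, List.reverse_append, List.reverse_cons, List.reverse_nil,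
        List.nil_append, List.singleton_append, List.prod_cons]
      rw [Matrix.mul_assoc, ih (le_of_lt hn)]
      ext i j
      rw [Matrix.mul_apply]
      simp only [hf, Matrix.sub_apply, Matrix.one_apply, vecMulVec_apply, Matrix.of_apply]
      have hsplit : ∀ a : Fin m,
          ((if i = a then (1:ℝ) else 0) - D i ⟨n, hnk⟩ * (if (a : ℕ) = (n : ℕ) then 1 else 0)) *
            (if n ≤ (j : ℕ) then D a j else 0)
          = (if i = a then (1:ℝ) else 0) * (if n ≤ (j : ℕ) then D a j else 0)
            - D i ⟨n, hnk⟩ * ((if (a : ℕ) = n then 1 else 0) * (if n ≤ (j : ℕ) then D a j else 0)) := by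
        intro a; ring
      simp_rw [hsplit]
      rw [Finset.sum_sub_distrib, ← Finset.mul_sum]
      have h1 : (∑ a : Fin m, (if i = a then (1:ℝ) else 0) * (if n ≤ (j : ℕ) then D a j else 0))
          = (if n ≤ (j : ℕ) then D i j else 0) := by
        rw [Finset.sum_eq_single i]
        · simp
        · intro b _ hb; simp [Ne.symm hb]
        · simp
      have h2 : (∑ a : Fin m, (if (a : ℕ) = n then (1:ℝ) else 0) * (if n ≤ (j : ℕ) then D a j else 0))
          = if n ≤ (j : ℕ) then D ⟨n, hnm⟩ j else 0 := by
        rw [sum_ite_left (fun a : Fin m => if n ≤ (j : ℕ) then D a j else 0) n]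
        simp [hnm]
      rw [h1, h2]
      rcases Nat.lt_trichotomy (j : ℕ) n with h | h | h
      · have h1' : ¬ n ≤ (j : ℕ) := by omega
        have h2' : ¬ n + 1 ≤ (j : ℕ) := by omega
        simp [h1', h2']
      · have h1' : n ≤ (j : ℕ) := by omega
        have h2' : ¬ n + 1 ≤ (j : ℕ) := by omega
        have hD1 : D ⟨n, hnm⟩ j = 1 := hdiag _ _ (by simp [h])
        have hDeq : (⟨n, hnk⟩ : Fin k) = j := by
          apply Fin.ext; simp [h]
        simp [h1', h2', hD1, hDeq]
      · have h1' : n ≤ (j : ℕ) := by omega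
        have h2' : n + 1 ≤ (j : ℕ) := by omega
        have hD0 : D ⟨n, hnm⟩ j = 0 := hupper _ _ (by simpa using h)
        simp [h1', h2', hD0]
  -- P * D = 0
  have hPD : (List.ofFn f).reverse.prod * D = 0 := by
    have hlen : (List.ofFn f).length ≤ k := by simp
    have := key k le_rfl
    rw [List.take_of_length_le hlen] at this
    rw [this]
    ext i j
    have := j.2
    simp only [Matrix.of_apply, Matrix.zero_apply]
    rw [if_neg (by omega)]
  -- P * R = R
  have hPR : (List.ofFn f).reverse.prod * R = R := by
    apply prod_fix
    intro x hx
    rw [List.mem_reverse] at hx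
    obtain ⟨j, rfl⟩ := List.mem_ofFn.1 hx
    have hjm : (j : ℕ) < m := lt_of_lt_of_le j.2 hk
    ext i a
    rw [Matrix.mul_apply]
    simp only [hf, Matrix.sub_apply, Matrix.one_apply, vecMulVec_apply]
    have hsplit : ∀ b : Fin m,
        ((if i = b then (1:ℝ) else 0) - D i j * (if (b : ℕ) = (j : ℕ) then 1 else 0)) * R b a
        = (if i = b then (1:ℝ) else 0) * R b a
          - D i j * ((if (b : ℕ) = (j : ℕ) then 1 else 0) * R b a) := by
      intro b; ring
    simp_rw [hsplit]
    rw [Finset.sum_sub_distrib, ← Finset.mul_sum]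
    have h1 : (∑ b : Fin m, (if i = b then (1:ℝ) else 0) * R b a) = R i a := by
      rw [Finset.sum_eq_single i]
      · simp
      · intro b _ hb; simp [Ne.symm hb]
      · simp
    have h2 : (∑ b : Fin m, (if (b : ℕ) = (j : ℕ) then (1:ℝ) else 0) * R b a) = 0 := by
      rw [sum_ite_left (fun b : Fin m => R b a) (j : ℕ)]
      rw [dif_pos hjm]
      simp only [hRdef, Matrix.of_apply]
      rw [if_neg]
      rintro ⟨hb1, hb2⟩
      have := j.2
      omega
    rw [h1, h2, mul_zero, sub_zero]
  -- the auxiliary invertible matrix D' = D * E + R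
  set D' : Matrix (Fin m) (Fin m) ℝ := D * E + R with hD'def
  have hD'entry : ∀ i j : Fin m,
      D' i j = (if h : (j : ℕ) < k then D i ⟨(j : ℕ), h⟩ else 0)
        + (if (i : ℕ) = (j : ℕ) ∧ k ≤ (j : ℕ) then 1 else 0) := by
    intro i j
    simp only [hD'def, Matrix.add_apply, hRdef, Matrix.of_apply]
    congr 1
    rw [Matrix.mul_apply]
    have : ∀ a : Fin k, D i a * E a j = D i a * (if (a : ℕ) = (j : ℕ) then 1 else 0) := by
      intro a; simp [hE, extr]
    simp_rw [this]
    exact sum_ite_right (fun a => D i a) (j : ℕ)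
  have hD'det : IsUnit D'.det := by
    have htri : D'.BlockTriangular OrderDual.toDual := by
      intro i j hij
      have hij' : (i : ℕ) < (j : ℕ) := hij
      rw [hD'entry, if_neg (by rintro ⟨h1, h2⟩; omega), add_zero]
      split_ifs with h
      · exact hupper _ _ (by simpa using hij')
      · rfl
    rw [Matrix.det_of_lowerTriangular _ htri]
    have hdg : ∀ i : Fin m, D' i i = 1 := by
      intro i
      rw [hD'entry]
      by_cases h : (i : ℕ) < k
      · rw [dif_pos h, hdiag _ _ rfl, if_neg (by rintro ⟨_, h2⟩; omega), add_zero]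
      · rw [dif_neg h, if_pos ⟨rfl, by omega⟩, zero_add]
    simp [hdg]
  -- the LHS times D'
  have hLHS : ((1 : Matrix (Fin m) (Fin m) ℝ) - D * ((E * D)⁻¹ * E)) * D' = R := by
    rw [hD'def, sub_mul, one_mul, mul_add]
    have e1 : D * ((E * D)⁻¹ * E) * (D * E) = D * E := by
      calc D * ((E * D)⁻¹ * E) * (D * E)
          = D * (((E * D)⁻¹ * (E * D)) * E) := by
            simp only [Matrix.mul_assoc]
        _ = D * E := by rw [hAinv, Matrix.one_mul]
    have e2 : D * ((E * D)⁻¹ * E) * R = 0 := by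
      calc D * ((E * D)⁻¹ * E) * R = D * ((E * D)⁻¹ * (E * R)) := by
            simp only [Matrix.mul_assoc]
        _ = 0 := by rw [hER, Matrix.mul_zero, Matrix.mul_zero]
    rw [e1, e2]
    abel
  -- the RHS times D'
  have hRHS : (List.ofFn f).reverse.prod * D' = R := by
    rw [hD'def, mul_add, ← Matrix.mul_assoc, hPD, hPR, Matrix.zero_mul, zero_add]
  -- conclude by cancelling the invertible D'
  have hcancel : ((1 : Matrix (Fin m) (Fin m) ℝ) - D * ((E * D)⁻¹ * E)) * D'
      = (List.ofFn f).reverse.prod * D' := by rw [hLHS, hRHS]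
  have := congrArg (fun X => X * D'⁻¹) hcancel
  simpa [Matrix.mul_nonsing_inv_cancel_right _ _ hD'det] using this
end

section
/- Let D_k ∈ ℝ^{m×k} be unit lower trapezoidal, obtained by appending to a unit lower trapezoidal D_{k−1} ∈ ℝ^{m×(k−1)} a column d_k whose first k−1 entries are zero and whose k-th entry is 1. With D_k⁻ := ([I_k 0] D_k)⁻¹ [I_k 0], the following recursion holds: D_k⁻ = [ D_{k−1}⁻ ; e_kᵀ (I − D_{k−1} D_{k−1}⁻) ], i.e., the first k−1 rows of D_k⁻ equal D_{k−1}⁻ and its last row equals e_kᵀ (I − D_{k−1} D_{k−1}⁻). -/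
open Matrix

noncomputable def Dminus (m k : ℕ) (D : Matrix (Fin m) (Fin k) ℝ) :
    Matrix (Fin k) (Fin m) ℝ :=
  (extr k m * D)⁻¹ * extr k m

lemma extr_mul_apply {n m : ℕ} (hnm : n ≤ m) (D : Matrix (Fin m) (Fin n) ℝ)
    (i j : Fin n) :
    (extr n m * D) i j = D ⟨i, lt_of_lt_of_le i.2 hnm⟩ j := by
  rw [Matrix.mul_apply]
  rw [Finset.sum_eq_single (⟨(i : ℕ), lt_of_lt_of_le i.2 hnm⟩ : Fin m)]
  · simp [extr]
  · intro t _ ht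
    have : (i : ℕ) ≠ (t : ℕ) := fun h => ht (by ext; simp [← h])
    simp [extr, this]
  · simp

lemma mul_extr_apply {n m : ℕ} (N : Matrix (Fin n) (Fin n) ℝ)
    (i : Fin n) (j : Fin m) :
    (N * extr n m) i j = if h : (j : ℕ) < n then N i ⟨j, h⟩ else 0 := by
  rw [Matrix.mul_apply]
  split
  · next h =>
    rw [Finset.sum_eq_single (⟨(j : ℕ), h⟩ : Fin n)]
    · simp [extr]
    · intro t _ ht
      have : (t : ℕ) ≠ (j : ℕ) := fun hh => ht (by ext; simp [hh])
      simp [extr, this]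
    · simp
  · next h =>
    apply Finset.sum_eq_zero
    intro t _
    have : (t : ℕ) ≠ (j : ℕ) := fun hh => by omega
    simp [extr, this]

/-- **Recursion for `D_k⁻`.** If the unit lower trapezoidal `D_k ∈ ℝ^{m×k}` is
obtained from `D_{k−1}` by appending a column `d_k` whose first `k−1` entries
vanish and whose `k`-th entry is `1`, then the first `k−1` rows of `D_k⁻` equal
`D_{k−1}⁻` and its last row equals `e_kᵀ (I − D_{k−1} D_{k−1}⁻)`. -/
theorem Dminus_recursion (m k : ℕ) (hk : k + 1 ≤ m)
    (D : Matrix (Fin m) (Fin (k + 1)) ℝ)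
    (hdiag : ∀ (i : Fin m) (j : Fin (k + 1)), (i : ℕ) = (j : ℕ) → D i j = 1)
    (hupper : ∀ (i : Fin m) (j : Fin (k + 1)), (i : ℕ) < (j : ℕ) → D i j = 0) :
    (∀ (i : Fin k) (j : Fin m),
        Dminus m (k + 1) D (Fin.castSucc i) j =
          Dminus m k (D.submatrix id Fin.castSucc) i j) ∧
      (∀ j : Fin m,
        Dminus m (k + 1) D (Fin.last k) j =
          ((1 : Matrix (Fin m) (Fin m) ℝ) -
              D.submatrix id Fin.castSucc *
                Dminus m k (D.submatrix id Fin.castSucc)) ⟨k, by omega⟩ j) := by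
  have hkm : k ≤ m := by omega
  set D' : Matrix (Fin m) (Fin k) ℝ := D.submatrix id Fin.castSucc with hD'
  set A : Matrix (Fin (k+1)) (Fin (k+1)) ℝ := extr (k+1) m * D with hA
  set A' : Matrix (Fin k) (Fin k) ℝ := extr k m * D' with hA'
  have hAapp : ∀ i j : Fin (k+1), A i j = D ⟨i, lt_of_lt_of_le i.2 hk⟩ j :=
    fun i j => extr_mul_apply hk D i j
  have hA'app : ∀ i j : Fin k,
      A' i j = D ⟨i, lt_of_lt_of_le i.2 hkm⟩ (Fin.castSucc j) := by
    intro i j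
    rw [hA', extr_mul_apply hkm D' i j]
    rfl
  have hA'det : A'.det = 1 := by
    rw [Matrix.det_of_lowerTriangular A' (by
      intro i j hij
      rw [hA'app]
      exact hupper _ _ (by simpa using hij))]
    exact Finset.prod_eq_one fun i _ => by rw [hA'app]; exact hdiag _ _ rfl
  have hA'unit : IsUnit A'.det := by rw [hA'det]; exact isUnit_one
  have hA'inv : A' * A'⁻¹ = 1 := Matrix.mul_nonsing_inv A' hA'unit
  set c : Fin k → ℝ := fun l => D ⟨k, by omega⟩ (Fin.castSucc l) with hc
  set B : Matrix (Fin (k+1)) (Fin (k+1)) ℝ := fun i j =>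
    if hi : (i : ℕ) < k then
      (if hj : (j : ℕ) < k then A'⁻¹ ⟨i, hi⟩ ⟨j, hj⟩ else 0)
    else
      (if hj : (j : ℕ) < k then -(∑ l, c l * A'⁻¹ l ⟨j, hj⟩) else 1) with hB
  -- entries of B
  have hB1 : ∀ i j : Fin k, B i.castSucc j.castSucc = A'⁻¹ i j := by
    intro i j
    simp only [hB]
    rw [dif_pos (by simp), dif_pos (by simp)]
    rfl
  have hB2 : ∀ i : Fin k, B i.castSucc (Fin.last k) = 0 := by
    intro i
    simp only [hB]
    rw [dif_pos (by simp), dif_neg (by simp)]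
  have hB3 : ∀ j : Fin k, B (Fin.last k) j.castSucc = -(∑ l, c l * A'⁻¹ l j) := by
    intro j
    simp only [hB]
    rw [dif_neg (by simp), dif_pos (by simp)]
    rfl
  have hB4 : B (Fin.last k) (Fin.last k) = 1 := by
    simp only [hB]
    rw [dif_neg (by simp), dif_neg (by simp)]
  -- entries of A
  have hAcs : ∀ i l : Fin k, A i.castSucc l.castSucc = A' i l := by
    intro i l
    rw [hAapp, hA'app]
    rfl
  have hAzero : ∀ i : Fin k, A (Fin.castSucc i) (Fin.last k) = 0 := by
    intro i
    rw [hAapp]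
    exact hupper _ _ (by simp)
  have hAlastc : ∀ l : Fin k, A (Fin.last k) l.castSucc = c l := by
    intro l
    rw [hAapp]
    rfl
  have hAlast : A (Fin.last k) (Fin.last k) = 1 := by
    rw [hAapp]
    exact hdiag _ _ (by simp)
  have hAB : A * B = 1 := by
    ext i j
    rw [Matrix.mul_apply, Fin.sum_univ_castSucc]
    induction i using Fin.lastCases with
    | last =>
      induction j using Fin.lastCases with
      | last =>
        rw [hAlast, hB4, Finset.sum_eq_zero (fun l _ => by rw [hB2, mul_zero])]
        simp [Matrix.one_apply]
      | cast j =>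
        rw [hAlast, hB3,
          Finset.sum_congr rfl (fun l _ => by rw [hAlastc, hB1])]
        have : (1 : Matrix (Fin (k+1)) (Fin (k+1)) ℝ) (Fin.last k) j.castSucc = 0 := by
          rw [Matrix.one_apply_ne (by simp [Fin.ext_iff]; omega)]
        rw [this]; ring
    | cast i =>
      induction j using Fin.lastCases with
      | last =>
        rw [hAzero, hB4, Finset.sum_eq_zero (fun l _ => by rw [hB2, mul_zero])]
        rw [Matrix.one_apply_ne (by simp [Fin.ext_iff]; omega)]
        ring
      | cast j =>
        rw [hAzero, zero_mul, add_zero,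
          Finset.sum_congr rfl (fun l _ => by rw [hAcs, hB1])]
        have := congrFun (congrFun hA'inv i) j
        rw [Matrix.mul_apply] at this
        rw [this]
        simp [Matrix.one_apply, Fin.ext_iff]
  have hAinv : A⁻¹ = B := Matrix.inv_eq_right_inv hAB
  have hDm1 : ∀ (i : Fin (k+1)) (j : Fin m),
      Dminus m (k+1) D i j = if h : (j : ℕ) < k + 1 then B i ⟨j, h⟩ else 0 := by
    intro i j
    show ((extr (k+1) m * D)⁻¹ * extr (k+1) m) i j = _
    rw [← hA, hAinv, mul_extr_apply]
  have hDm2 : ∀ (i : Fin k) (j : Fin m),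
      Dminus m k D' i j = if h : (j : ℕ) < k then A'⁻¹ i ⟨j, h⟩ else 0 := by
    intro i j
    show ((extr k m * D')⁻¹ * extr k m) i j = _
    rw [← hA', mul_extr_apply]
  constructor
  · intro i j
    rw [hDm1, hDm2]
    by_cases h : (j : ℕ) < k
    · rw [dif_pos (by omega), dif_pos h]
      simp only [hB]
      rw [dif_pos (by simp), dif_pos (by simpa using h)]
      congr 1 <;> exact Fin.ext (by simp)
    · rw [dif_neg h]
      by_cases h2 : (j : ℕ) < k + 1
      · rw [dif_pos h2]
        simp only [hB]
        rw [dif_pos (by simp), dif_neg (by simpa using h)]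
      · rw [dif_neg h2]
  · intro j
    rw [hDm1]
    rw [Matrix.sub_apply, Matrix.mul_apply]
    have hsum : ∀ l : Fin k, D' (⟨k, by omega⟩ : Fin m) l * Dminus m k D' l j
        = c l * (if h : (j : ℕ) < k then A'⁻¹ l ⟨j, h⟩ else 0) := by
      intro l
      rw [hDm2]
      rfl
    rw [Finset.sum_congr rfl (fun l _ => hsum l)]
    by_cases h : (j : ℕ) < k
    · rw [dif_pos (by omega)]
      simp only [hB]
      rw [dif_neg (by simp), dif_pos (by simpa using h)]
      have h1 : (1 : Matrix (Fin m) (Fin m) ℝ) ⟨k, by omega⟩ j = 0 := by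
        rw [Matrix.one_apply_ne (by simp [Fin.ext_iff]; omega)]
      rw [h1]
      simp only [dif_pos h]
      ring
    · by_cases h2 : (j : ℕ) < k + 1
      · have hjk : (j : ℕ) = k := by omega
        rw [dif_pos h2]
        simp only [hB]
        rw [dif_neg (by simpa using h), dif_neg (by simpa [hjk] using h)]
        have h1 : (1 : Matrix (Fin m) (Fin m) ℝ) ⟨k, by omega⟩ j = 1 := by
          rw [show (⟨k, by omega⟩ : Fin m) = j from Fin.ext (by simp [hjk]),
            Matrix.one_apply_eq]
        rw [h1, Finset.sum_eq_zero (fun l _ => by rw [dif_neg h, mul_zero])]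
        ring
      · rw [dif_neg h2]
        have h1 : (1 : Matrix (Fin m) (Fin m) ℝ) ⟨k, by omega⟩ j = 0 := by
          rw [Matrix.one_apply_ne (by simp [Fin.ext_iff]; omega)]
        rw [h1, Finset.sum_eq_zero (fun l _ => by rw [dif_neg (by omega), mul_zero])]
        ring
end

section
/- Let D_k ∈ ℝ^{m×k} be unit lower trapezoidal as above and D_k⁻ := ([I_k 0] D_k)⁻¹ [I_k 0]. Then for any i ≤ k, the i-th row of D_k⁻ equals e_iᵀ (I − D_{i−1} D_{i−1}⁻), where D_{i−1} consists of the first i−1 columns of D_k. Consequently, for any vector w ∈ ℝ^m, the i-th entry of D_k⁻ w equals e_iᵀ ∏_{j=i−1}^{1} (I − d_j e_jᵀ) w. -/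
open Matrix

namespace Aux

variable {m k : ℕ}

lemma extr_mul_apply (hk : k ≤ m) (D : Matrix (Fin m) (Fin k) ℝ) (p q : Fin k) :
    (extr k m * D) p q = D (Fin.castLE hk p) q := by
  rw [Matrix.mul_apply]
  rw [Finset.sum_eq_single (Fin.castLE hk p)]
  · simp [extr]
  · intro a _ ha
    have : (p : ℕ) ≠ (a : ℕ) := by
      intro h; apply ha; apply Fin.ext; simp [← h]
    simp [extr, this]
  · simp

lemma mul_extr_apply (M : Matrix (Fin k) (Fin k) ℝ) (i : Fin k) (j : Fin m) :
    (M * extr k m) i j = if h : (j : ℕ) < k then M i ⟨j, h⟩ else 0 := by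
  rw [Matrix.mul_apply]
  split
  · next h =>
    rw [Finset.sum_eq_single (⟨(j : ℕ), h⟩ : Fin k)]
    · simp [extr]
    · intro a _ ha
      have : (a : ℕ) ≠ (j : ℕ) := by
        intro hc; apply ha; apply Fin.ext; simp [hc]
      simp [extr, this]
    · simp
  · next h =>
    apply Finset.sum_eq_zero
    intro q _
    have : (q : ℕ) ≠ (j : ℕ) := by
      intro hc; exact h (hc ▸ q.2)
    simp [extr, this]

variable (hk : k ≤ m) (D : Matrix (Fin m) (Fin k) ℝ)
    (hdiag : ∀ (i : Fin m) (j : Fin k), (i : ℕ) = (j : ℕ) → D i j = 1)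
    (hupper : ∀ (i : Fin m) (j : Fin k), (i : ℕ) < (j : ℕ) → D i j = 0)

include hk hupper in
lemma A_tri : (extr k m * D).BlockTriangular OrderDual.toDual := by
  intro p q hpq
  rw [extr_mul_apply hk]
  exact hupper _ _ (by simpa using hpq)

include hk hdiag hupper in
lemma A_det : (extr k m * D).det = 1 := by
  rw [Matrix.det_of_lowerTriangular _ (A_tri hk D hupper)]
  apply Finset.prod_eq_one
  intro p _
  rw [extr_mul_apply hk]
  exact hdiag _ _ (by simp)

include hk hdiag hupper in
lemma A_isUnit : IsUnit (extr k m * D).det := by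
  rw [A_det hk D hdiag hupper]; exact isUnit_one

include hk hdiag hupper in
lemma Dminus_mul : Dminus m k D * D = 1 := by
  rw [Dminus, Matrix.mul_assoc, Matrix.nonsing_inv_mul _ (A_isUnit hk D hdiag hupper)]

include hk hdiag hupper in
lemma Dminus_supp (i : Fin k) (j : Fin m) (hij : (i : ℕ) < (j : ℕ)) :
    Dminus m k D i j = 0 := by
  rw [Dminus, mul_extr_apply]
  split
  · next h =>
    haveI : Invertible (extr k m * D) :=
      (extr k m * D).invertibleOfIsUnitDet (A_isUnit hk D hdiag hupper)
    exact Matrix.blockTriangular_inv_of_blockTriangular (A_tri hk D hupper)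
      (show OrderDual.toDual (⟨(j:ℕ), h⟩ : Fin k) < OrderDual.toDual i by simpa [Fin.lt_def] using hij)
  · rfl

include hk hdiag hupper in
lemma uniq (x : Fin m → ℝ) (N : ℕ) (hN : N < k)
    (hsupp : ∀ j : Fin m, N < (j : ℕ) → x j = 0)
    (hdot : ∀ c : Fin k, (c : ℕ) ≤ N → ∑ a, x a * D a c = 0) :
    ∀ j, x j = 0 := by
  suffices H : ∀ t (j : Fin m), N < (j : ℕ) + t → x j = 0 by
    intro j
    exact H (N + 1) j (by omega)
  intro t
  induction t with
  | zero => intro j hj; exact hsupp j (by simpa using hj)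
  | succ t ih =>
    intro j hj
    by_cases h : N < (j : ℕ) + t
    · exact ih j h
    have hjN : (j : ℕ) + t = N := by omega
    have hjk : (j : ℕ) < k := by omega
    set c : Fin k := ⟨(j : ℕ), hjk⟩ with hc
    have hdc := hdot c (by simp [hc]; omega)
    rw [Finset.sum_eq_single j] at hdc
    · rw [hdiag j c (by simp [hc]), mul_one] at hdc
      exact hdc
    · intro a _ ha
      rcases lt_trichotomy (a : ℕ) (j : ℕ) with h1 | h1 | h1
      · rw [hupper a c (by simpa [hc] using h1), mul_zero]
      · exact absurd (Fin.ext h1) ha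
      · rw [ih a (by omega), zero_mul]
    · simp

include hk hdiag hupper in
lemma row (i : Fin k) :
    ∀ j : Fin m,
      Dminus m k D i j =
        ((1 : Matrix (Fin m) (Fin m) ℝ) -
            D.submatrix id (fun a : Fin (i : ℕ) => Fin.castLE (le_of_lt i.2) a) *
              Dminus m (i : ℕ)
                (D.submatrix id (fun a : Fin (i : ℕ) => Fin.castLE (le_of_lt i.2) a)))
          (Fin.castLE hk i) j := by
  set D' := D.submatrix id (fun a : Fin (i : ℕ) => Fin.castLE (le_of_lt i.2) a) with hD'
  have hi_m : (i : ℕ) ≤ m := le_of_lt (lt_of_lt_of_le i.2 hk)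
  have hdiag' : ∀ (a : Fin m) (b : Fin (i : ℕ)), (a : ℕ) = (b : ℕ) → D' a b = 1 := by
    intro a b h; exact hdiag a _ (by simpa using h)
  have hupper' : ∀ (a : Fin m) (b : Fin (i : ℕ)), (a : ℕ) < (b : ℕ) → D' a b = 0 := by
    intro a b h; exact hupper a _ (by simpa using h)
  have key : ∀ j, Dminus m k D i j -
      ((1 : Matrix (Fin m) (Fin m) ℝ) - D' * (Dminus m (i : ℕ) D')) (Fin.castLE hk i) j = 0 := by
    apply uniq hk D hdiag hupper _ (i : ℕ) i.2
    · -- support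
      intro j hj
      rw [Dminus_supp hk D hdiag hupper i j hj]
      rw [Matrix.sub_apply, Matrix.one_apply_ne (by
        intro hc
        rw [← hc] at hj
        simp at hj)]
      rw [Matrix.mul_apply, Finset.sum_eq_zero, zero_sub, sub_zero, neg_zero]
      intro b _
      rw [Dminus_supp hi_m D' hdiag' hupper' b j (lt_trans b.2 hj), mul_zero]
    · -- dot products
      intro c hc
      simp only [sub_mul, Finset.sum_sub_distrib]
      have h1 : ∑ a, Dminus m k D i a * D a c = (1 : Matrix (Fin k) (Fin k) ℝ) i c := by
        rw [← Matrix.mul_apply, Dminus_mul hk D hdiag hupper]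
      have h2 : ∑ a, (1 : Matrix (Fin m) (Fin m) ℝ) (Fin.castLE hk i) a * D a c
          = D (Fin.castLE hk i) c := by
        rw [Finset.sum_eq_single (Fin.castLE hk i)]
        · rw [Matrix.one_apply_eq, one_mul]
        · intro a _ ha; rw [Matrix.one_apply_ne (Ne.symm ha), zero_mul]
        · simp
      have h3 : ∑ a, (D' * (Dminus m (i : ℕ) D')) (Fin.castLE hk i) a * D a c
          = ∑ b, D' (Fin.castLE hk i) b * ∑ a, (Dminus m (i : ℕ) D') b a * D a c := by
        simp only [Matrix.mul_apply, Finset.sum_mul, Finset.mul_sum]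
        rw [Finset.sum_comm]
        exact Finset.sum_congr rfl fun b _ => Finset.sum_congr rfl fun a _ => by ring
      simp only [Matrix.sub_apply, sub_mul, Finset.sum_sub_distrib, h1, h2, h3]
      rcases lt_or_eq_of_le hc with hlt | heq
      · -- c < i
        have hci : (c : ℕ) < (i : ℕ) := hlt
        have hcol : ∀ a : Fin m, D a c = D' a ⟨(c : ℕ), hci⟩ := fun a => rfl
        have h4 : ∀ b : Fin (i : ℕ), (∑ a, (Dminus m (i : ℕ) D') b a * D a c)
            = (1 : Matrix (Fin (i : ℕ)) (Fin (i : ℕ)) ℝ) b ⟨(c : ℕ), hci⟩ := by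
          intro b
          rw [← Dminus_mul hi_m D' hdiag' hupper', Matrix.mul_apply]
          exact Finset.sum_congr rfl fun a _ => by rw [hcol a]
        simp only [h4]
        have h5 : ∑ b, D' (Fin.castLE hk i) b *
            (1 : Matrix (Fin (i : ℕ)) (Fin (i : ℕ)) ℝ) b ⟨(c : ℕ), hci⟩
            = D (Fin.castLE hk i) c := by
          rw [Finset.sum_eq_single (⟨(c : ℕ), hci⟩ : Fin (i : ℕ))]
          · rw [Matrix.one_apply_eq, mul_one, ← hcol]
          · intro b _ hb; rw [Matrix.one_apply_ne hb, mul_zero]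
          · simp
        rw [h5, Matrix.one_apply_ne (by intro hcon; rw [hcon] at hci; exact lt_irrefl _ hci)]
        ring
      · -- c = i
        have h4 : ∀ b : Fin (i : ℕ), (∑ a, (Dminus m (i : ℕ) D') b a * D a c) = 0 := by
          intro b
          apply Finset.sum_eq_zero
          intro a _
          rcases le_or_gt (a : ℕ) (b : ℕ) with hab | hab
          · rw [hupper a c (by omega : (a : ℕ) < (c : ℕ)), mul_zero]
          · rw [Dminus_supp hi_m D' hdiag' hupper' b a hab, zero_mul]
        simp only [h4, mul_zero, Finset.sum_const_zero]
        have hceq : c = i := Fin.ext heq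
        rw [hceq, Matrix.one_apply_eq, hdiag _ _ (by simp)]
        ring
  intro j
  have := key j
  linarith [this]

end Aux

namespace Aux

lemma stable {m k k' : ℕ} (hk : k ≤ m) (h' : k' ≤ k) (D : Matrix (Fin m) (Fin k) ℝ)
    (hdiag : ∀ (i : Fin m) (j : Fin k), (i : ℕ) = (j : ℕ) → D i j = 1)
    (hupper : ∀ (i : Fin m) (j : Fin k), (i : ℕ) < (j : ℕ) → D i j = 0)
    (b : Fin k') (j : Fin m) :
    Dminus m k D (Fin.castLE h' b) j =
      Dminus m k' (D.submatrix id (Fin.castLE h')) b j := by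
  set D'' := D.submatrix id (Fin.castLE h') with hD''
  have hk'' : k' ≤ m := h'.trans hk
  have hdiag'' : ∀ (a : Fin m) (c : Fin k'), (a : ℕ) = (c : ℕ) → D'' a c = 1 := by
    intro a c h; exact hdiag a _ (by simpa using h)
  have hupper'' : ∀ (a : Fin m) (c : Fin k'), (a : ℕ) < (c : ℕ) → D'' a c = 0 := by
    intro a c h; exact hupper a _ (by simpa using h)
  have key : ∀ j, Dminus m k D (Fin.castLE h' b) j - Dminus m k' D'' b j = 0 := by
    apply uniq hk D hdiag hupper _ (b : ℕ) (lt_of_lt_of_le b.2 h')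
    · intro j hj
      rw [Dminus_supp hk D hdiag hupper _ j (by simpa using hj),
        Dminus_supp hk'' D'' hdiag'' hupper'' b j hj, sub_zero]
    · intro c hc
      have hck' : (c : ℕ) < k' := lt_of_le_of_lt hc b.2
      simp only [sub_mul, Finset.sum_sub_distrib]
      have h1 : ∑ a, Dminus m k D (Fin.castLE h' b) a * D a c
          = (1 : Matrix (Fin k) (Fin k) ℝ) (Fin.castLE h' b) c := by
        rw [← Matrix.mul_apply, Dminus_mul hk D hdiag hupper]
      have h2 : ∑ a, Dminus m k' D'' b a * D a c
          = (1 : Matrix (Fin k') (Fin k') ℝ) b ⟨(c : ℕ), hck'⟩ := by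
        rw [← Dminus_mul hk'' D'' hdiag'' hupper'', Matrix.mul_apply]
        exact Finset.sum_congr rfl fun a _ => rfl
      rw [h1, h2, Matrix.one_apply, Matrix.one_apply]
      by_cases hbc : ((Fin.castLE h' b : Fin k) = c)
      · rw [if_pos hbc, if_pos (Fin.ext (by simpa using congrArg Fin.val hbc)), sub_self]
      · rw [if_neg hbc, if_neg (by
          intro hcon
          exact hbc (Fin.ext (by simpa using congrArg Fin.val hcon))), sub_self]
  have := key j
  linarith [this]


lemma prod_eq {m : ℕ} : ∀ (k : ℕ) (hk : k ≤ m) (D : Matrix (Fin m) (Fin k) ℝ)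
    (hdiag : ∀ (i : Fin m) (j : Fin k), (i : ℕ) = (j : ℕ) → D i j = 1)
    (hupper : ∀ (i : Fin m) (j : Fin k), (i : ℕ) < (j : ℕ) → D i j = 0),
    (1 : Matrix (Fin m) (Fin m) ℝ) - D * Dminus m k D =
      (List.ofFn fun j : Fin k =>
        (1 : Matrix (Fin m) (Fin m) ℝ) -
          vecMulVec (fun a => D a j)
            (fun a : Fin m => if (a : ℕ) = (j : ℕ) then 1 else 0)).reverse.prod := by
  intro k
  induction k with
  | zero =>
    intro hk D hdiag hupper
    have h0 : D * Dminus m 0 D = 0 := by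
      ext p q; simp [Matrix.mul_apply]
    rw [h0, sub_zero]
    simp
  | succ k ih =>
    intro hk D hdiag hupper
    have hk' : k ≤ m := (Nat.le_succ k).trans hk
    have hkm : k < m := lt_of_lt_of_le (Nat.lt_succ_self k) hk
    set D' := D.submatrix id (Fin.castLE (Nat.le_succ k)) with hD'
    have hdiag' : ∀ (a : Fin m) (b : Fin k), (a : ℕ) = (b : ℕ) → D' a b = 1 := by
      intro a b h; exact hdiag a _ (by simpa using h)
    have hupper' : ∀ (a : Fin m) (b : Fin k), (a : ℕ) < (b : ℕ) → D' a b = 0 := by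
      intro a b h; exact hupper a _ (by simpa using h)
    have hIH := ih hk' D' hdiag' hupper'
    set f : Fin (k + 1) → Matrix (Fin m) (Fin m) ℝ := fun j =>
      (1 : Matrix (Fin m) (Fin m) ℝ) -
        vecMulVec (fun a => D a j)
          (fun a : Fin m => if (a : ℕ) = (j : ℕ) then 1 else 0) with hf
    have hsplit : (List.ofFn f).reverse.prod
        = f (Fin.last k) * (List.ofFn fun i : Fin k => f i.castSucc).reverse.prod := by
      rw [List.ofFn_succ', List.concat_eq_append, List.reverse_append]
      simp
    have hcast : (List.ofFn fun i : Fin k => f i.castSucc)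
        = (List.ofFn fun j : Fin k =>
            (1 : Matrix (Fin m) (Fin m) ℝ) -
              vecMulVec (fun a => D' a j)
                (fun a : Fin m => if (a : ℕ) = (j : ℕ) then 1 else 0)) := rfl
    rw [hsplit, hcast, ← hIH, hf]
    ext p q
    have hrowlast : ∀ q', Dminus m (k + 1) D (Fin.last k) q'
        = ((1 : Matrix (Fin m) (Fin m) ℝ) - D' * Dminus m k D') (⟨k, hkm⟩ : Fin m) q' :=
      fun q' => row hk D hdiag hupper (Fin.last k) q'
    have hmulB : (D * Dminus m (k + 1) D) p q
        = (∑ b : Fin k, D p b.castSucc * Dminus m k D' b q)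
          + D p (Fin.last k) *
            ((1 : Matrix (Fin m) (Fin m) ℝ) - D' * Dminus m k D') (⟨k, hkm⟩ : Fin m) q := by
      rw [Matrix.mul_apply, Fin.sum_univ_castSucc]
      congr 1
      · exact Finset.sum_congr rfl fun b _ => by
          rw [show Dminus m (k + 1) D b.castSucc q = Dminus m k D' b q from
            stable hk (Nat.le_succ k) D hdiag hupper b q]
      · rw [hrowlast q]
    have hMpq : ((1 : Matrix (Fin m) (Fin m) ℝ) - D' * Dminus m k D') p q
        = (1 : Matrix (Fin m) (Fin m) ℝ) p q
          - ∑ b : Fin k, D p b.castSucc * Dminus m k D' b q := by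
      rw [Matrix.sub_apply, Matrix.mul_apply]
      exact congrArg _ (Finset.sum_congr rfl fun b _ => rfl)
    set M := (1 : Matrix (Fin m) (Fin m) ℝ) - D' * Dminus m k D' with hM
    have hrhs : (((1 : Matrix (Fin m) (Fin m) ℝ) -
        vecMulVec (fun a => D a (Fin.last k))
          (fun a : Fin m => if (a : ℕ) = ((Fin.last k : Fin (k+1)) : ℕ) then 1 else 0)) * M) p q
        = M p q - D p (Fin.last k) * M (⟨k, hkm⟩ : Fin m) q := by
      rw [Matrix.mul_apply]
      have e0 : ∀ r : Fin m,
          ((1 : Matrix (Fin m) (Fin m) ℝ) -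
            vecMulVec (fun a => D a (Fin.last k))
              (fun a : Fin m => if (a : ℕ) = ((Fin.last k : Fin (k+1)) : ℕ) then 1 else 0)) p r * M r q
          = (1 : Matrix (Fin m) (Fin m) ℝ) p r * M r q
            - D p (Fin.last k) * ((if (r : ℕ) = k then (1:ℝ) else 0) * M r q) := by
        intro r
        rw [Matrix.sub_apply, Matrix.vecMulVec_apply, Fin.val_last]
        ring
      rw [Finset.sum_congr rfl fun r _ => e0 r, Finset.sum_sub_distrib]
      have e1 : ∑ r, (1 : Matrix (Fin m) (Fin m) ℝ) p r * M r q = M p q := by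
        rw [Finset.sum_eq_single p]
        · rw [Matrix.one_apply_eq, one_mul]
        · intro r _ hr; rw [Matrix.one_apply_ne (Ne.symm hr), zero_mul]
        · simp
      have e2 : ∑ r : Fin m, D p (Fin.last k) * ((if (r : ℕ) = k then (1:ℝ) else 0) * M r q)
          = D p (Fin.last k) * M (⟨k, hkm⟩ : Fin m) q := by
        rw [← Finset.mul_sum]
        congr 1
        rw [Finset.sum_eq_single (⟨k, hkm⟩ : Fin m)]
        · simp
        · intro r _ hr
          rw [if_neg (by intro hcon; exact hr (Fin.ext (by simpa using hcon))), zero_mul]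
        · simp
      rw [e1, e2]
    rw [Matrix.sub_apply, hmulB, hrhs, hMpq]
    ring

end Aux

/-- **Rows of `D_k⁻`.** For a unit lower trapezoidal `D_k ∈ ℝ^{m×k}` and `i ≤ k`,
the `i`-th row of `D_k⁻` equals `e_iᵀ (I − D_{i−1} D_{i−1}⁻)`, where `D_{i−1}`
consists of the first `i−1` columns of `D_k`; consequently, for any `w ∈ ℝ^m`,
the `i`-th entry of `D_k⁻ w` equals `e_iᵀ ∏_{j=i−1}^{1} (I − d_j e_jᵀ) w`. -/
theorem Dminus_row_formula (m k : ℕ) (hk : k ≤ m)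
    (D : Matrix (Fin m) (Fin k) ℝ)
    (hdiag : ∀ (i : Fin m) (j : Fin k), (i : ℕ) = (j : ℕ) → D i j = 1)
    (hupper : ∀ (i : Fin m) (j : Fin k), (i : ℕ) < (j : ℕ) → D i j = 0)
    (i : Fin k) :
    (∀ j : Fin m,
        Dminus m k D i j =
          ((1 : Matrix (Fin m) (Fin m) ℝ) -
              D.submatrix id (fun a : Fin (i : ℕ) => Fin.castLE (le_of_lt i.2) a) *
                Dminus m (i : ℕ)
                  (D.submatrix id (fun a : Fin (i : ℕ) => Fin.castLE (le_of_lt i.2) a)))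
            (Fin.castLE hk i) j) ∧
      (∀ w : Fin m → ℝ,
        (Dminus m k D *ᵥ w) i =
          (((List.ofFn fun j : Fin (i : ℕ) =>
              (1 : Matrix (Fin m) (Fin m) ℝ) -
                vecMulVec (fun a => D a (Fin.castLE (le_of_lt i.2) j))
                  (fun a : Fin m => if (a : ℕ) = (j : ℕ) then 1 else 0)).reverse.prod
            *ᵥ w) (Fin.castLE hk i))) := by
  constructor
  · exact Aux.row hk D hdiag hupper i
  · intro w
    have hr := Aux.row hk D hdiag hupper i
    have hi_m : (i : ℕ) ≤ m := le_of_lt (lt_of_lt_of_le i.2 hk)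
    set D' := D.submatrix id (fun a : Fin (i : ℕ) => Fin.castLE (le_of_lt i.2) a) with hD'
    have hdiag' : ∀ (a : Fin m) (b : Fin (i : ℕ)), (a : ℕ) = (b : ℕ) → D' a b = 1 := by
      intro a b h; exact hdiag a _ (by simpa using h)
    have hupper' : ∀ (a : Fin m) (b : Fin (i : ℕ)), (a : ℕ) < (b : ℕ) → D' a b = 0 := by
      intro a b h; exact hupper a _ (by simpa using h)
    have hp := Aux.prod_eq (m := m) (i : ℕ) hi_m D' hdiag' hupper'
    rw [Matrix.mulVec, Matrix.mulVec, dotProduct, dotProduct]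
    apply Finset.sum_congr rfl
    intro j _
    rw [hr j, hp]
    rfl
end

section
/- Let W ∈ ℝ^{N×p} with p ≤ N have full column rank, let S ∈ ℝ^{p×q} (q < p), g ∈ ℝ^p, and let z* minimize ‖g − S z‖ over z ∈ ℝ^q and ẑ minimize ‖W(g − S z)‖ over z ∈ ℝ^q. Then ‖W(g − S z*)‖ ≥ ‖W(g − S ẑ)‖ and ‖W(g − S z*)‖ ≤ κ(W) ‖W(g − S ẑ)‖, where κ(W) = ‖W‖ ‖W†‖ is the spectral condition number and W† the Moore–Penrose inverse. -/
open Matrix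
open scoped Matrix.Norms.L2Operator

/-- The Euclidean norm of a vector in `ℝ^n`. -/
noncomputable def euclNorm {n : ℕ} (v : Fin n → ℝ) : ℝ :=
  Real.sqrt (∑ i, v i ^ 2)

/-- The Moore–Penrose inverse `W† = (Wᵀ W)⁻¹ Wᵀ` of a full column rank matrix. -/
noncomputable def pinv {N p : ℕ} (W : Matrix (Fin N) (Fin p) ℝ) :
    Matrix (Fin p) (Fin N) ℝ :=
  (Wᵀ * W)⁻¹ * Wᵀ

lemma euclNorm_eq_norm {n : ℕ} (v : Fin n → ℝ) :
    euclNorm v = ‖(WithLp.equiv 2 (Fin n → ℝ)).symm v‖ := by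
  rw [EuclideanSpace.norm_eq]
  simp [euclNorm, Real.norm_eq_abs, sq_abs]

lemma euclNorm_mulVec_le {m n : ℕ} (A : Matrix (Fin m) (Fin n) ℝ) (x : Fin n → ℝ) :
    euclNorm (A *ᵥ x) ≤ ‖A‖ * euclNorm x := by
  rw [euclNorm_eq_norm, euclNorm_eq_norm]
  exact A.l2_opNorm_mulVec ((WithLp.equiv 2 (Fin n → ℝ)).symm x)

lemma pinv_mul {N p : ℕ} (W : Matrix (Fin N) (Fin p) ℝ) (hrank : W.rank = p) :
    pinv W * W = 1 := by
  have hr : (Wᵀ * W).rank = p := by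
    rw [Matrix.rank_transpose_mul_self, hrank]
  have hunit : IsUnit (Wᵀ * W) := by
    rw [← Matrix.mulVec_surjective_iff_isUnit]
    have : LinearMap.range (Wᵀ * W).mulVecLin = ⊤ := by
      apply Submodule.eq_top_of_finrank_eq
      rw [Matrix.rank] at hr
      rw [hr, Module.finrank_fintype_fun_eq_card, Fintype.card_fin]
    intro v
    exact (LinearMap.range_eq_top.mp this) v
  rw [pinv, Matrix.mul_assoc]
  exact Matrix.nonsing_inv_mul _ ((Matrix.isUnit_iff_isUnit_det _).mp hunit)

/-- **Quasi-minimal vs. minimal residual.** If `z*` minimizes `‖g − S z‖` and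
`ẑ` minimizes `‖W (g − S z)‖`, where `W` has full column rank, then
`‖W (g − S ẑ)‖ ≤ ‖W (g − S z*)‖ ≤ κ(W) ‖W (g − S ẑ)‖` with
`κ(W) = ‖W‖ ‖W†‖` the spectral condition number. -/
theorem quasi_minimal_residual_bound (N p q : ℕ) (hp : p ≤ N) (hq : q < p)
    (W : Matrix (Fin N) (Fin p) ℝ) (hrank : W.rank = p)
    (S : Matrix (Fin p) (Fin q) ℝ) (g : Fin p → ℝ)
    (zstar zhat : Fin q → ℝ)
    (hzstar : ∀ z : Fin q → ℝ, euclNorm (g - S *ᵥ zstar) ≤ euclNorm (g - S *ᵥ z))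
    (hzhat : ∀ z : Fin q → ℝ,
      euclNorm (W *ᵥ (g - S *ᵥ zhat)) ≤ euclNorm (W *ᵥ (g - S *ᵥ z))) :
    euclNorm (W *ᵥ (g - S *ᵥ zhat)) ≤ euclNorm (W *ᵥ (g - S *ᵥ zstar)) ∧
      euclNorm (W *ᵥ (g - S *ᵥ zstar)) ≤
        (‖W‖ * ‖pinv W‖) * euclNorm (W *ᵥ (g - S *ᵥ zhat)) := by
  refine ⟨hzhat zstar, ?_⟩
  set rstar := g - S *ᵥ zstar
  set rhat := g - S *ᵥ zhat
  have h1 : euclNorm (W *ᵥ rstar) ≤ ‖W‖ * euclNorm rstar := euclNorm_mulVec_le W rstar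
  have h2 : euclNorm rstar ≤ euclNorm rhat := hzstar zhat
  have h3 : rhat = pinv W *ᵥ (W *ᵥ rhat) := by
    rw [Matrix.mulVec_mulVec, pinv_mul W hrank, Matrix.one_mulVec]
  have h4 : euclNorm rhat ≤ ‖pinv W‖ * euclNorm (W *ᵥ rhat) := by
    calc euclNorm rhat = euclNorm (pinv W *ᵥ (W *ᵥ rhat)) := by rw [← h3]
    _ ≤ ‖pinv W‖ * euclNorm (W *ᵥ rhat) := euclNorm_mulVec_le _ _
  calc euclNorm (W *ᵥ rstar) ≤ ‖W‖ * euclNorm rstar := h1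
    _ ≤ ‖W‖ * (‖pinv W‖ * euclNorm (W *ᵥ rhat)) := by
        refine mul_le_mul_of_nonneg_left (h2.trans h4) (norm_nonneg _)
    _ = (‖W‖ * ‖pinv W‖) * euclNorm (W *ᵥ rhat) := by ring
end

section
/- Suppose A ∈ ℝ^{m×n}, B ∈ ℝ^{n×m}, λ, μ ∈ ℝ, and suppose D_{k+1} ∈ ℝ^{m×(k+1)}, L_{k+1} ∈ ℝ^{n×(k+1)} satisfy A L_k = D_{k+1} H_{k+1,k} and B D_k = L_{k+1} F_{k+1,k}, where D_k, L_k denote the first k columns and H_{k+1,k}, F_{k+1,k} ∈ ℝ^{(k+1)×k} are upper Hessenberg. Let K = [[λI_m, A], [B, μI_n]], let W_k = blkdiag(D_k, L_k) Π_k with Π_k the perfect-shuffle permutation interleaving the columns, and let Λ = blkdiag(λ I_m, μ I_n). Then K W_k = W_{k+1} S_{k+1,k}, where S_{k+1,k} ∈ ℝ^{2(k+1)×2k} is the block upper Hessenberg matrix with 2×2 blocks Θ_{j,j} = [[λ, h_{j,j}],[f_{j,j}, μ]] on the diagonal, Φ_{i,j} = [[0, h_{i,j}],[f_{i,j}, 0]]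 off-diagonal. -/
open Matrix

lemma sum_range_two_mul' {M : Type*} [AddCommMonoid M] (r : ℕ) (g : ℕ → M) :
    ∑ i ∈ Finset.range (2*r), g i = ∑ p ∈ Finset.range r, (g (2*p) + g (2*p+1)) := by
  induction r with
  | zero => simp
  | succ r ih =>
    have h : 2*(r+1) = (2*r+1)+1 := by ring
    rw [h, Finset.sum_range_succ, Finset.sum_range_succ, Finset.sum_range_succ, ih]
    abel

lemma sum_fin_two_mul {M : Type*} [AddCommMonoid M] (r : ℕ) (f : Fin (2*r) → M) :
    ∑ c, f c = ∑ p : Fin r, (f ⟨2*p.val, by omega⟩ + f ⟨2*p.val+1, by omega⟩) := by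
  classical
  set g : ℕ → M := fun i => if h : i < 2*r then f ⟨i, h⟩ else 0 with hg
  have h1 : ∑ c, f c = ∑ i ∈ Finset.range (2*r), g i := by
    rw [← Fin.sum_univ_eq_sum_range]
    exact Finset.sum_congr rfl (fun c _ => by simp [hg, c.isLt])
  have h2 : ∑ p : Fin r, (f ⟨2*p.val, by omega⟩ + f ⟨2*p.val+1, by omega⟩)
      = ∑ p ∈ Finset.range r, (g (2*p) + g (2*p+1)) := by
    rw [← Fin.sum_univ_eq_sum_range]
    refine Finset.sum_congr rfl (fun p _ => ?_)
    have hp1 : 2*(p:ℕ) < 2*r := by omega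
    have hp2 : 2*(p:ℕ)+1 < 2*r := by omega
    simp [hg, hp1, hp2]
  rw [h1, h2, sum_range_two_mul']

/-- Interleaved (perfect-shuffle) basis matrix `W = blkdiag(D, L) Π`, whose
`(2j−1)`-st column is `(d_j; 0)` and whose `2j`-th column is `(0; ℓ_j)`. -/
def shuffleW (m n r : ℕ) (D : Matrix (Fin m) (Fin r) ℝ)
    (L : Matrix (Fin n) (Fin r) ℝ) :
    Matrix (Fin m ⊕ Fin n) (Fin (2 * r)) ℝ :=
  fun i j =>
    Sum.elim
      (fun a => if j.val % 2 = 0 then D a ⟨j.val / 2, by have := j.isLt; omega⟩ else 0)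
      (fun a => if j.val % 2 = 1 then L a ⟨j.val / 2, by have := j.isLt; omega⟩ else 0) i

/-- The block upper Hessenberg matrix `S_{k+1,k}` with `2×2` diagonal blocks
`Θ_{j,j} = [[λ, h_{j,j}], [f_{j,j}, μ]]` and off-diagonal blocks
`Φ_{i,j} = [[0, h_{i,j}], [f_{i,j}, 0]]`. -/
def Smat (k : ℕ) (lam mu : ℝ) (H F : Matrix (Fin (k + 1)) (Fin k) ℝ) :
    Matrix (Fin (2 * (k + 1))) (Fin (2 * k)) ℝ :=
  fun a b =>
    if a.val % 2 = 0 then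
      (if b.val % 2 = 0 then (if a.val / 2 = b.val / 2 then lam else 0)
       else H ⟨a.val / 2, by have := a.isLt; omega⟩ ⟨b.val / 2, by have := b.isLt; omega⟩)
    else
      (if b.val % 2 = 0 then
        F ⟨a.val / 2, by have := a.isLt; omega⟩ ⟨b.val / 2, by have := b.isLt; omega⟩
       else (if a.val / 2 = b.val / 2 then mu else 0))

/-- **The GP-CMRH relation `K W_k = W_{k+1} S_{k+1,k}`.** -/
theorem gpcmrh_relation (m n k : ℕ) (lam mu : ℝ)
    (A : Matrix (Fin m) (Fin n) ℝ) (B : Matrix (Fin n) (Fin m) ℝ)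
    (D : Matrix (Fin m) (Fin (k + 1)) ℝ) (L : Matrix (Fin n) (Fin (k + 1)) ℝ)
    (H F : Matrix (Fin (k + 1)) (Fin k) ℝ)
    (hH : ∀ (i : Fin (k + 1)) (j : Fin k), (j : ℕ) + 1 < (i : ℕ) → H i j = 0)
    (hF : ∀ (i : Fin (k + 1)) (j : Fin k), (j : ℕ) + 1 < (i : ℕ) → F i j = 0)
    (hAL : A * L.submatrix id Fin.castSucc = D * H)
    (hBD : B * D.submatrix id Fin.castSucc = L * F) :
    fromBlocks (lam • (1 : Matrix (Fin m) (Fin m) ℝ)) A B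
        (mu • (1 : Matrix (Fin n) (Fin n) ℝ)) *
      shuffleW m n k (D.submatrix id Fin.castSucc) (L.submatrix id Fin.castSucc) =
      shuffleW m n (k + 1) D L * Smat k lam mu H F := by
  
  classical
  ext i j
  rw [Matrix.mul_apply, Matrix.mul_apply, sum_fin_two_mul (k+1), Fintype.sum_sum_type]
  have e0 : ∀ p : ℕ, (2*p) % 2 = 0 := fun p => by omega
  have e1 : ∀ p : ℕ, (2*p+1) % 2 = 1 := fun p => by omega
  have d0 : ∀ p : ℕ, (2*p) / 2 = p := fun p => by omega
  have d1 : ∀ p : ℕ, (2*p+1) / 2 = p := fun p => by omega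
  have hjlt : (j : ℕ) / 2 < k + 1 := by have := j.isLt; omega
  have hfe : ∀ p : Fin (k+1), ((p:ℕ) = (j:ℕ)/2) = (p = ⟨(j:ℕ)/2, hjlt⟩) := by
    intro p; simp [Fin.ext_iff]
  rcases Nat.mod_two_eq_zero_or_one j.val with hj | hj
  · cases i with
    | inl a =>
      simp [shuffleW, Smat, Matrix.fromBlocks_apply₁₁, Matrix.fromBlocks_apply₁₂, hj, e0, e1,
        d0, d1, Matrix.smul_apply, Matrix.one_apply, hfe, mul_ite, ite_mul,
        Finset.sum_ite_eq, Finset.sum_ite_eq']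
      exact mul_comm _ _
    | inr a =>
      have hBD' := congrFun (congrFun hBD a) ⟨(j:ℕ)/2, by have := j.isLt; omega⟩
      rw [Matrix.mul_apply, Matrix.mul_apply] at hBD'
      simp only [Matrix.submatrix_apply, id_eq, Fin.castSucc_mk] at hBD'
      simp only [shuffleW, Smat, Matrix.fromBlocks_apply₁₁, Matrix.fromBlocks_apply₁₂,
        Matrix.fromBlocks_apply₂₁, Matrix.fromBlocks_apply₂₂, hj, e0, e1, d0, d1,
        Sum.elim_inl, Sum.elim_inr,
        Matrix.submatrix_apply, id_eq, Fin.castSucc_mk, Matrix.smul_apply, Matrix.one_apply,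
        if_true, if_false, one_ne_zero, Fin.eta, mul_zero, zero_mul, add_zero, zero_add,
        Finset.sum_const_zero, smul_eq_mul, reduceCtorEq, ite_false, ite_true]
      rw [hBD']
  · cases i with
    | inl a =>
      have hAL' := congrFun (congrFun hAL a) ⟨(j:ℕ)/2, by have := j.isLt; omega⟩
      rw [Matrix.mul_apply, Matrix.mul_apply] at hAL'
      simp only [Matrix.submatrix_apply, id_eq, Fin.castSucc_mk] at hAL'
      simp only [shuffleW, Smat, Matrix.fromBlocks_apply₁₁, Matrix.fromBlocks_apply₁₂,
        Matrix.fromBlocks_apply₂₁, Matrix.fromBlocks_apply₂₂, hj, e0, e1, d0, d1,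
        Sum.elim_inl, Sum.elim_inr,
        Matrix.submatrix_apply, id_eq, Fin.castSucc_mk, Matrix.smul_apply, Matrix.one_apply,
        one_ne_zero, Fin.eta, mul_zero, zero_mul, add_zero, zero_add,
        Finset.sum_const_zero, smul_eq_mul, reduceCtorEq, ite_false, ite_true]
      rw [hAL']
    | inr a =>
      simp [shuffleW, Smat, Matrix.fromBlocks_apply₂₁, Matrix.fromBlocks_apply₂₂, hj, e0, e1,
        d0, d1, Matrix.smul_apply,
        Matrix.one_apply, hfe, mul_ite, ite_mul, Finset.sum_ite_eq, Finset.sum_ite_eq']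
      exact mul_comm _ _
end
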